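/- If within every stratum j the conditional proposal dominates the baseline on error points in the sense that q_j(x) ≥ p_j(x) for all x with z(x)=1 and additionally π_j ≤ 1/2, then T_j = Var_{q_j}(z p_j/q_j) ≤ π_j − π_j^2 = V_j, i.e., Δ_j ≤ 0, and hence Var(ε̂_SIS) ≤ Var(ε̂_SRS) under proportional allocation. -/

import Mathlib

open Finset

/-- Expectation of `f` under a discrete pmf `μ` on a finite type. -/
noncomputable def dExp {α : Type*} [Fintype α] (μ f : α → ℝ) : ℝ := ∑ x, μ x * f x

/-- Variance of `f` under a discrete pmf `μ`. -/
noncomputable def dVar {α : Type*} [Fintype α] (μ f : α → ℝ) : ℝ :=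
  dExp μ (fun x => (f x) ^ 2) - (dExp μ f) ^ 2

/-- Stratum weight `P_μ(S = j)`. -/
noncomputable def strW {α : Type*} [Fintype α] {P : ℕ} (S : α → Fin P) (μ : α → ℝ)
    (j : Fin P) : ℝ := ∑ x, if S x = j then μ x else 0

/-- Conditional distribution of `μ` given stratum `j`. -/
noncomputable def strC {α : Type*} [Fintype α] {P : ℕ} (S : α → Fin P) (μ : α → ℝ)
    (j : Fin P) (x : α) : ℝ := if S x = j then μ x / strW S μ j else 0

/-- Product pmf of `m j` i.i.d. draws from `μ j` in each stratum `j`, independent across strata. -/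
noncomputable def prodPMF {α : Type*} [Fintype α] {P : ℕ} (m : Fin P → ℕ)
    (μ : Fin P → α → ℝ) (ω : (j : Fin P) → Fin (m j) → α) : ℝ :=
  ∏ j, ∏ k, μ j (ω j k)

/-- Stratified estimator `∑ j, w j · (1 / n_j) ∑ k, g j (X_{j,k})`. -/
noncomputable def stratEst {α : Type*} [Fintype α] {P : ℕ} (m : Fin P → ℕ)
    (w : Fin P → ℝ) (g : Fin P → α → ℝ) (ω : (j : Fin P) → Fin (m j) → α) : ℝ :=
  ∑ j, w j * (((m j : ℝ))⁻¹ * ∑ k, g j (ω j k))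

/-- Pmf of `n` i.i.d. draws from `μ`. -/
noncomputable def iidPMF {α : Type*} [Fintype α] (n : ℕ) (μ : α → ℝ)
    (ω : Fin n → α) : ℝ := ∏ i, μ (ω i)

/-- Sample-mean estimator over `n` i.i.d. draws. -/
noncomputable def meanEst {α : Type*} [Fintype α] (n : ℕ) (f : α → ℝ)
    (ω : Fin n → α) : ℝ := ((n : ℝ))⁻¹ * ∑ i, f (ω i)

/-- Within-stratum importance-weighted integrand `z(x) p_j(x) / q_j(x)`. -/
noncomputable def sisG {α : Type*} [Fintype α] {P : ℕ} (S : α → Fin P) (p q z : α → ℝ)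
    (j : Fin P) (x : α) : ℝ := z x * strC S p j x / strC S q j x

section Aux
variable {α : Type*} [Fintype α]

lemma aux_iid_one (ν : α → ℝ) (hν : ∑ x, ν x = 1) (c : ℕ) :
    ∑ τ : Fin c → α, ∏ k, ν (τ k) = 1 := by
  rw [← Fintype.prod_sum]; simp [hν]

lemma aux_iid_single (ν : α → ℝ) (hν : ∑ x, ν x = 1) {c : ℕ} (k₀ : Fin c) (F : α → ℝ) :
    ∑ τ : Fin c → α, (∏ k, ν (τ k)) * F (τ k₀) = dExp ν F := by
  have h1 : ∀ τ : Fin c → α, (∏ k, ν (τ k)) * F (τ k₀)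
      = ∏ k, (ν (τ k) * if k = k₀ then F (τ k) else 1) := by
    intro τ
    rw [Finset.prod_mul_distrib, Fintype.prod_ite_eq' k₀ (fun k => F (τ k))]
  simp_rw [h1]
  rw [show (∑ τ : Fin c → α, ∏ k, (ν (τ k) * if k = k₀ then F (τ k) else 1))
      = ∏ k, ∑ x, (ν x * if k = k₀ then F x else 1) from
    (Fintype.prod_sum (fun k x => ν x * if k = k₀ then F x else 1)).symm]
  have h2 : ∀ k : Fin c, (∑ x, ν x * if k = k₀ then F x else 1)
      = if k = k₀ then dExp ν F else 1 := by
    intro k; by_cases h : k = k₀ <;> simp [h, dExp, hν]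
  simp_rw [h2]
  exact Fintype.prod_ite_eq' k₀ (fun _ => dExp ν F)

lemma aux_iid_pair (ν : α → ℝ) (hν : ∑ x, ν x = 1) {c : ℕ} {k₀ l₀ : Fin c} (hkl : k₀ ≠ l₀)
    (F G : α → ℝ) :
    ∑ τ : Fin c → α, (∏ k, ν (τ k)) * (F (τ k₀) * G (τ l₀)) = dExp ν F * dExp ν G := by
  have h1 : ∀ τ : Fin c → α, (∏ k, ν (τ k)) * (F (τ k₀) * G (τ l₀))
      = ∏ k, (ν (τ k) * ((if k = k₀ then F (τ k) else 1) * (if k = l₀ then G (τ k) else 1))) := by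
    intro τ
    rw [Finset.prod_mul_distrib, Finset.prod_mul_distrib,
      Fintype.prod_ite_eq' k₀ (fun k => F (τ k)), Fintype.prod_ite_eq' l₀ (fun k => G (τ k))]
  simp_rw [h1]
  rw [show (∑ τ : Fin c → α, ∏ k, (ν (τ k) * ((if k = k₀ then F (τ k) else 1) * (if k = l₀ then G (τ k) else 1))))
      = ∏ k, ∑ x, (ν x * ((if k = k₀ then F x else 1) * (if k = l₀ then G x else 1))) from
    (Fintype.prod_sum (fun k x => ν x * ((if k = k₀ then F x else 1) * (if k = l₀ then G x else 1)))).symm]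
  have h2 : ∀ k : Fin c, (∑ x, ν x * ((if k = k₀ then F x else 1) * (if k = l₀ then G x else 1)))
      = (if k = k₀ then dExp ν F else 1) * (if k = l₀ then dExp ν G else 1) := by
    intro k
    by_cases h : k = k₀
    · subst h; simp [hkl, dExp]
    · by_cases h' : k = l₀
      · subst h'; simp [Ne.symm hkl, h, dExp, hν]
      · simp [h, h', dExp, hν]
  simp_rw [h2, Finset.prod_mul_distrib,
    Fintype.prod_ite_eq' k₀ (fun _ => dExp ν F), Fintype.prod_ite_eq' l₀ (fun _ => dExp ν G)]

lemma aux_mean_exp (ν : α → ℝ) (hν : ∑ x, ν x = 1) {c : ℕ} (hc : c ≠ 0) (F : α → ℝ) :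
    ∑ τ : Fin c → α, (∏ k, ν (τ k)) * meanEst c F τ = dExp ν F := by
  have hcr : (c : ℝ) ≠ 0 := Nat.cast_ne_zero.mpr hc
  have h1 : ∀ τ : Fin c → α, (∏ k, ν (τ k)) * meanEst c F τ
      = (c:ℝ)⁻¹ * ∑ i, (∏ k, ν (τ k)) * F (τ i) := by
    intro τ; rw [meanEst, ← Finset.mul_sum]; ring
  simp_rw [h1]
  rw [← Finset.mul_sum, Finset.sum_comm]
  have h2 : ∀ i : Fin c, ∑ τ : Fin c → α, (∏ k, ν (τ k)) * F (τ i) = dExp ν F :=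
    fun i => aux_iid_single ν hν i F
  simp_rw [h2]
  rw [Finset.sum_const, card_univ, Fintype.card_fin, nsmul_eq_mul]
  field_simp

lemma aux_mean_sq (ν : α → ℝ) (hν : ∑ x, ν x = 1) {c : ℕ} (hc : c ≠ 0) (F : α → ℝ) :
    ∑ τ : Fin c → α, (∏ k, ν (τ k)) * (meanEst c F τ * meanEst c F τ)
      = (c:ℝ)⁻¹ * dExp ν (fun x => F x ^ 2) + (1 - (c:ℝ)⁻¹) * (dExp ν F) ^ 2 := by
  have hcr : (c : ℝ) ≠ 0 := Nat.cast_ne_zero.mpr hc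
  set A := dExp ν (fun x => F x ^ 2) with hA
  set B := dExp ν F with hB
  have h1 : ∀ τ : Fin c → α, (∏ k, ν (τ k)) * (meanEst c F τ * meanEst c F τ)
      = (c:ℝ)⁻¹ * (c:ℝ)⁻¹ * ∑ k, ∑ l, (∏ i, ν (τ i)) * (F (τ k) * F (τ l)) := by
    intro τ
    have e1 : (∑ i, F (τ i)) * (∑ i, F (τ i)) = ∑ k, ∑ l, F (τ k) * F (τ l) :=
      Finset.sum_mul_sum _ _ _ _
    have e2 : (∏ i, ν (τ i)) * ∑ k, ∑ l, F (τ k) * F (τ l)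
        = ∑ k, ∑ l, (∏ i, ν (τ i)) * (F (τ k) * F (τ l)) := by
      simp_rw [Finset.mul_sum]
    rw [meanEst, ← e2, ← e1]; ring
  simp_rw [h1]
  rw [← Finset.mul_sum, Finset.sum_comm]
  have key : ∀ k : Fin c, ∑ τ : Fin c → α, ∑ l, (∏ i, ν (τ i)) * (F (τ k) * F (τ l))
      = A + ((c:ℝ) - 1) * (B * B) := by
    intro k
    rw [Finset.sum_comm]
    have hkl : ∀ l : Fin c, ∑ τ : Fin c → α, (∏ i, ν (τ i)) * (F (τ k) * F (τ l))
        = if k = l then A else B * B := by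
      intro l
      by_cases h : k = l
      · subst h
        rw [if_pos rfl, hA]
        have : ∀ τ : Fin c → α, (∏ i, ν (τ i)) * (F (τ k) * F (τ k))
            = (∏ i, ν (τ i)) * ((fun x => F x ^ 2) (τ k)) := by
          intro τ
          show (∏ i, ν (τ i)) * (F (τ k) * F (τ k)) = (∏ i, ν (τ i)) * (F (τ k) ^ 2)
          ring
        simp_rw [this]
        exact aux_iid_single ν hν k (fun x => F x ^ 2)
      · rw [if_neg h]
        exact aux_iid_pair ν hν h F F
    simp_rw [hkl]
    have : ∀ l : Fin c, (if k = l then A else B * B)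
        = B * B + (if k = l then A - B * B else 0) := by
      intro l; split <;> ring
    simp_rw [this]
    rw [Finset.sum_add_distrib, Finset.sum_const, Finset.sum_ite_eq, card_univ,
      Fintype.card_fin, nsmul_eq_mul]
    simp; ring
  simp_rw [key]
  rw [Finset.sum_const, card_univ, Fintype.card_fin, nsmul_eq_mul]
  field_simp
end Aux

section Strata
variable {α : Type*} [Fintype α] {P : ℕ}

lemma aux_str_single (μ : Fin P → α → ℝ) (m : Fin P → ℕ) (hμ : ∀ j, ∑ x, μ j x = 1)
    (j₀ : Fin P) (H : (Fin (m j₀) → α) → ℝ) :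
    ∑ ω : (j : Fin P) → Fin (m j) → α, prodPMF m μ ω * H (ω j₀)
      = ∑ τ : Fin (m j₀) → α, (∏ k, μ j₀ (τ k)) * H τ := by
  classical
  set G : (j : Fin P) → (Fin (m j) → α) → ℝ :=
    Function.update (fun j (τ : Fin (m j) → α) => ∏ k, μ j (τ k)) j₀
      (fun τ => (∏ k, μ j₀ (τ k)) * H τ) with hG
  have hint : ∀ ω : (j : Fin P) → Fin (m j) → α,
      prodPMF m μ ω * H (ω j₀) = ∏ j, G j (ω j) := by
    intro ω
    rw [prodPMF, ← Finset.mul_prod_erase Finset.univ _ (Finset.mem_univ j₀),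
      ← Finset.mul_prod_erase Finset.univ (fun j => G j (ω j)) (Finset.mem_univ j₀)]
    have h1 : G j₀ (ω j₀) = (∏ k, μ j₀ (ω j₀ k)) * H (ω j₀) := by
      rw [hG, Function.update_self]
    have h2 : ∀ j ∈ Finset.univ.erase j₀, G j (ω j) = ∏ k, μ j (ω j k) := by
      intro j hj; rw [hG, Function.update_of_ne (Finset.ne_of_mem_erase hj)]
    rw [h1, Finset.prod_congr rfl h2]
    ring
  simp_rw [hint]
  rw [show (∑ ω : (j : Fin P) → Fin (m j) → α, ∏ j, G j (ω j))
      = ∏ j, ∑ τ : Fin (m j) → α, G j τ from (Fintype.prod_sum G).symm]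
  rw [Fintype.prod_eq_single j₀ (fun j hj => by
    rw [hG, Function.update_of_ne hj]
    exact aux_iid_one (μ j) (hμ j) (m j))]
  rw [hG, Function.update_self]

lemma aux_str_pair (μ : Fin P → α → ℝ) (m : Fin P → ℕ) (hμ : ∀ j, ∑ x, μ j x = 1)
    {j₀ j₁ : Fin P} (hj : j₀ ≠ j₁) (H : (Fin (m j₀) → α) → ℝ) (K : (Fin (m j₁) → α) → ℝ) :
    ∑ ω : (j : Fin P) → Fin (m j) → α, prodPMF m μ ω * (H (ω j₀) * K (ω j₁))
      = (∑ τ : Fin (m j₀) → α, (∏ k, μ j₀ (τ k)) * H τ)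
        * (∑ τ : Fin (m j₁) → α, (∏ k, μ j₁ (τ k)) * K τ) := by
  classical
  set G : (j : Fin P) → (Fin (m j) → α) → ℝ :=
    Function.update
      (Function.update (fun j (τ : Fin (m j) → α) => ∏ k, μ j (τ k)) j₀
        (fun τ => (∏ k, μ j₀ (τ k)) * H τ)) j₁
      (fun τ => (∏ k, μ j₁ (τ k)) * K τ) with hG
  have hj₀mem : j₀ ∈ Finset.univ.erase j₁ := Finset.mem_erase.mpr ⟨hj, Finset.mem_univ _⟩
  have hint : ∀ ω : (j : Fin P) → Fin (m j) → α,
      prodPMF m μ ω * (H (ω j₀) * K (ω j₁)) = ∏ j, G j (ω j) := by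
    intro ω
    rw [prodPMF, ← Finset.mul_prod_erase Finset.univ _ (Finset.mem_univ j₁),
      ← Finset.mul_prod_erase _ _ hj₀mem,
      ← Finset.mul_prod_erase Finset.univ (fun j => G j (ω j)) (Finset.mem_univ j₁),
      ← Finset.mul_prod_erase _ (fun j => G j (ω j)) hj₀mem]
    have h1 : G j₁ (ω j₁) = (∏ k, μ j₁ (ω j₁ k)) * K (ω j₁) := by
      rw [hG, Function.update_self]
    have h0 : G j₀ (ω j₀) = (∏ k, μ j₀ (ω j₀ k)) * H (ω j₀) := by
      rw [hG, Function.update_of_ne hj, Function.update_self]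
    have h2 : ∀ j ∈ (Finset.univ.erase j₁).erase j₀, G j (ω j) = ∏ k, μ j (ω j k) := by
      intro j hjmem
      have hne₀ : j ≠ j₀ := Finset.ne_of_mem_erase hjmem
      have hne₁ : j ≠ j₁ := Finset.ne_of_mem_erase (Finset.mem_of_mem_erase hjmem)
      rw [hG, Function.update_of_ne hne₁, Function.update_of_ne hne₀]
    rw [h1, h0, Finset.prod_congr rfl h2]
    ring
  simp_rw [hint]
  rw [show (∑ ω : (j : Fin P) → Fin (m j) → α, ∏ j, G j (ω j))
      = ∏ j, ∑ τ : Fin (m j) → α, G j τ from (Fintype.prod_sum G).symm]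
  have hfac : ∀ j : Fin P, (∑ τ : Fin (m j) → α, G j τ)
      = (if j = j₀ then ∑ τ : Fin (m j₀) → α, (∏ k, μ j₀ (τ k)) * H τ else 1)
        * (if j = j₁ then ∑ τ : Fin (m j₁) → α, (∏ k, μ j₁ (τ k)) * K τ else 1) := by
    intro j
    by_cases h1 : j = j₁
    · subst h1
      rw [if_neg (Ne.symm hj), if_pos rfl, one_mul, hG, Function.update_self]
    · by_cases h0 : j = j₀
      · subst h0
        rw [if_pos rfl, if_neg h1, mul_one, hG, Function.update_of_ne h1,
          Function.update_self]
      · rw [if_neg h0, if_neg h1, one_mul, hG, Function.update_of_ne h1,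
          Function.update_of_ne h0]
        exact aux_iid_one (μ j) (hμ j) (m j)
  simp_rw [hfac, Finset.prod_mul_distrib, Fintype.prod_ite_eq' j₀, Fintype.prod_ite_eq' j₁]

lemma aux_strat_var (μ : Fin P → α → ℝ) (hμ : ∀ j, ∑ x, μ j x = 1) (m : Fin P → ℕ)
    (hm : ∀ j, m j ≠ 0) (w : Fin P → ℝ) (g : Fin P → α → ℝ) :
    dVar (prodPMF m μ) (stratEst m w g)
      = ∑ j, (w j) ^ 2 * ((m j : ℝ))⁻¹ * dVar (μ j) (g j) := by
  classical
  set e : Fin P → ℝ := fun j => dExp (μ j) (g j) with he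
  set A : Fin P → ℝ := fun j => dExp (μ j) (fun x => g j x ^ 2) with hA
  have hEst : ∀ ω : (j : Fin P) → Fin (m j) → α,
      stratEst m w g ω = ∑ j, w j * meanEst (m j) (g j) (ω j) := fun ω => rfl
  have hj1 : ∀ j : Fin P, ∑ ω : (i : Fin P) → Fin (m i) → α,
      prodPMF m μ ω * (w j * meanEst (m j) (g j) (ω j)) = w j * e j := by
    intro j
    have hstep : ∀ ω : (i : Fin P) → Fin (m i) → α,
        prodPMF m μ ω * (w j * meanEst (m j) (g j) (ω j))
          = w j * (prodPMF m μ ω * meanEst (m j) (g j) (ω j)) := fun ω => by ring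
    simp_rw [hstep]
    rw [← Finset.mul_sum, aux_str_single μ m hμ j (meanEst (m j) (g j)),
      aux_mean_exp (μ j) (hμ j) (hm j) (g j)]
  have hE : dExp (prodPMF m μ) (stratEst m w g) = ∑ j, w j * e j := by
    rw [dExp]
    simp_rw [hEst, Finset.mul_sum]
    rw [Finset.sum_comm]
    exact Finset.sum_congr rfl fun j _ => hj1 j
  have key : ∀ j j' : Fin P, ∑ ω : (i : Fin P) → Fin (m i) → α,
      prodPMF m μ ω * ((w j * meanEst (m j) (g j) (ω j)) * (w j' * meanEst (m j') (g j') (ω j')))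
      = if j = j' then (w j) ^ 2 * (((m j : ℝ))⁻¹ * A j + (1 - ((m j : ℝ))⁻¹) * (e j) ^ 2)
        else (w j * e j) * (w j' * e j') := by
    intro j j'
    by_cases h : j = j'
    · subst h
      rw [if_pos rfl]
      have hstep : ∀ ω : (i : Fin P) → Fin (m i) → α,
          prodPMF m μ ω * ((w j * meanEst (m j) (g j) (ω j)) * (w j * meanEst (m j) (g j) (ω j)))
            = (w j * w j) * (prodPMF m μ ω
              * ((fun τ => meanEst (m j) (g j) τ * meanEst (m j) (g j) τ) (ω j))) := fun ω => by
        show _ = (w j * w j) * (prodPMF m μ ω * (meanEst (m j) (g j) (ω j) * meanEst (m j) (g j) (ω j)))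
        ring
      simp_rw [hstep]
      rw [← Finset.mul_sum,
        aux_str_single μ m hμ j (fun τ => meanEst (m j) (g j) τ * meanEst (m j) (g j) τ),
        aux_mean_sq (μ j) (hμ j) (hm j) (g j)]
      ring
    · rw [if_neg h]
      have hstep : ∀ ω : (i : Fin P) → Fin (m i) → α,
          prodPMF m μ ω * ((w j * meanEst (m j) (g j) (ω j)) * (w j' * meanEst (m j') (g j') (ω j')))
            = (w j * w j') * (prodPMF m μ ω
              * (meanEst (m j) (g j) (ω j) * meanEst (m j') (g j') (ω j'))) := fun ω => by ring
      simp_rw [hstep]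
      rw [← Finset.mul_sum, aux_str_pair μ m hμ h (meanEst (m j) (g j)) (meanEst (m j') (g j')),
        aux_mean_exp (μ j) (hμ j) (hm j) (g j), aux_mean_exp (μ j') (hμ j') (hm j') (g j')]
      ring
  have hE2 : dExp (prodPMF m μ) (fun ω => stratEst m w g ω ^ 2)
      = ∑ j, ∑ j', (if j = j' then (w j) ^ 2 * (((m j : ℝ))⁻¹ * A j
          + (1 - ((m j : ℝ))⁻¹) * (e j) ^ 2) else (w j * e j) * (w j' * e j')) := by
    rw [dExp]
    have hsq : ∀ ω : (i : Fin P) → Fin (m i) → α,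
        prodPMF m μ ω * stratEst m w g ω ^ 2
          = ∑ j, ∑ j', prodPMF m μ ω * ((w j * meanEst (m j) (g j) (ω j))
            * (w j' * meanEst (m j') (g j') (ω j'))) := by
      intro ω
      rw [hEst ω, sq, Finset.sum_mul_sum]
      simp_rw [Finset.mul_sum]
    simp_rw [hsq]
    rw [Finset.sum_comm]
    refine Finset.sum_congr rfl fun j _ => ?_
    rw [Finset.sum_comm]
    exact Finset.sum_congr rfl fun j' _ => key j j'
  rw [dVar, hE2, hE, sq, Finset.sum_mul_sum, ← Finset.sum_sub_distrib]
  rw [show (∑ j, (w j) ^ 2 * ((m j : ℝ))⁻¹ * dVar (μ j) (g j))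
    = ∑ j, (w j) ^ 2 * (((m j : ℝ))⁻¹ * (A j - (e j) ^ 2)) from
      Finset.sum_congr rfl fun j _ => by rw [dVar]; ring]
  refine Finset.sum_congr rfl fun j _ => ?_
  rw [← Finset.sum_sub_distrib]
  have hterm : ∀ j' : Fin P,
      ((if j = j' then (w j) ^ 2 * (((m j : ℝ))⁻¹ * A j + (1 - ((m j : ℝ))⁻¹) * (e j) ^ 2)
        else (w j * e j) * (w j' * e j')) - w j * e j * (w j' * e j'))
      = (if j = j' then (w j) ^ 2 * (((m j : ℝ))⁻¹ * (A j - (e j) ^ 2)) else 0) := by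
    intro j'
    by_cases h : j = j'
    · subst h; rw [if_pos rfl, if_pos rfl]; ring
    · rw [if_neg h, if_neg h]; ring
  simp_rw [hterm]
  rw [Finset.sum_ite_eq, if_pos (Finset.mem_univ j)]

end Strata

/-- if each conditional proposal dominates the baseline on error points and
π_j ≤ 1/2, then T_j ≤ V_j in every stratum and Var(SIS) ≤ Var(SRS). -/
theorem dominating_proposal_gives_sis_over_srs {α : Type*} [Fintype α] {P : ℕ}
    (S : α → Fin P) (p q z : α → ℝ) (n : ℕ) (m : Fin P → ℕ)
    (hp0 : ∀ x, 0 ≤ p x) (hp1 : ∑ x, p x = 1)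
    (hq0 : ∀ x, 0 ≤ q x) (hq1 : ∑ x, q x = 1)
    (hw : ∀ j, 0 < strW S p j) (hr : ∀ j, 0 < strW S q j)
    (habsj : ∀ j x, 0 < strC S p j x → 0 < strC S q j x)
    (hz : ∀ x, z x = 0 ∨ z x = 1)
    (hn : 0 < n) (hm : ∀ j, 1 ≤ m j)
    (hprop : ∀ j, (m j : ℝ) = n * strW S p j)
    (hdom : ∀ j x, z x = 1 → strC S p j x ≤ strC S q j x)
    (hhalf : ∀ j, dExp (strC S p j) z ≤ 1 / 2) :
    (∀ j, dVar (strC S q j) (sisG S p q z j)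
        ≤ dExp (strC S p j) z * (1 - dExp (strC S p j) z))
    ∧ dVar (prodPMF m (strC S q)) (stratEst m (strW S p) (sisG S p q z))
        ≤ dVar (prodPMF m (strC S p)) (stratEst m (strW S p) (fun _ x => z x)) := by
  classical
  -- basic facts about conditional pmfs
  have hmne : ∀ j, m j ≠ 0 := fun j => Nat.one_le_iff_ne_zero.mp (hm j)
  have hpj0 : ∀ j x, 0 ≤ strC S p j x := by
    intro j x
    rw [strC]
    split
    · exact div_nonneg (hp0 x) (le_of_lt (hw j))
    · exact le_refl 0
  have hqj0 : ∀ j x, 0 ≤ strC S q j x := by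
    intro j x
    rw [strC]
    split
    · exact div_nonneg (hq0 x) (le_of_lt (hr j))
    · exact le_refl 0
  have habs0 : ∀ j x, strC S q j x = 0 → strC S p j x = 0 := by
    intro j x h
    by_contra hne
    exact absurd h (ne_of_gt (habsj j x (lt_of_le_of_ne (hpj0 j x) (Ne.symm hne))))
  have hsum : ∀ (μ : α → ℝ) (j : Fin P), strW S μ j ≠ 0 → ∑ x, strC S μ j x = 1 := by
    intro μ j h
    have : ∀ x, strC S μ j x = (if S x = j then μ x else 0) / strW S μ j := by
      intro x; rw [strC]; split <;> simp
    simp_rw [this]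
    rw [← Finset.sum_div]
    rw [show (∑ x, if S x = j then μ x else 0) = strW S μ j from rfl, div_self h]
  have hpsum : ∀ j, ∑ x, strC S p j x = 1 := fun j => hsum p j (ne_of_gt (hw j))
  have hqsum : ∀ j, ∑ x, strC S q j x = 1 := fun j => hsum q j (ne_of_gt (hr j))
  -- first moment of the importance-weighted integrand
  have hEg : ∀ j, dExp (strC S q j) (sisG S p q z j) = dExp (strC S p j) z := by
    intro j
    rw [dExp, dExp]
    refine Finset.sum_congr rfl fun x _ => ?_
    rw [sisG]
    by_cases hqx : strC S q j x = 0
    · rw [hqx, habs0 j x hqx]; simp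
    · field_simp
  -- second moment bound
  have hEg2 : ∀ j, dExp (strC S q j) (fun x => (sisG S p q z j x) ^ 2)
      ≤ dExp (strC S p j) z := by
    intro j
    rw [dExp, dExp]
    refine Finset.sum_le_sum fun x _ => ?_
    rcases hz x with h0 | h1
    · rw [sisG, h0]; simp
    · rw [sisG, h1, one_mul, mul_one]
      by_cases hqx : strC S q j x = 0
      · rw [hqx, habs0 j x hqx]; simp
      · have hqpos : 0 < strC S q j x := lt_of_le_of_ne (hqj0 j x) (Ne.symm hqx)
        have hstep : strC S q j x * (strC S p j x / strC S q j x) ^ 2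
            = strC S p j x ^ 2 / strC S q j x := by
          field_simp
        rw [hstep, div_le_iff₀ hqpos]
        have := hdom j x h1
        nlinarith [hpj0 j x]
  -- per-stratum conclusion
  have part1 : ∀ j, dVar (strC S q j) (sisG S p q z j)
      ≤ dExp (strC S p j) z * (1 - dExp (strC S p j) z) := by
    intro j
    rw [dVar, hEg j]
    have := hEg2 j
    nlinarith
  refine ⟨part1, ?_⟩
  -- variance of the SRS estimator per stratum
  have hVz : ∀ j, dVar (strC S p j) (fun x => z x)
      = dExp (strC S p j) z * (1 - dExp (strC S p j) z) := by
    intro j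
    rw [dVar]
    have hz2 : dExp (strC S p j) (fun x => z x ^ 2) = dExp (strC S p j) z := by
      rw [dExp, dExp]
      refine Finset.sum_congr rfl fun x _ => ?_
      rcases hz x with h | h <;> rw [h] <;> ring
    rw [hz2]
    ring
  rw [aux_strat_var (strC S q) hqsum m hmne (strW S p) (sisG S p q z),
    aux_strat_var (strC S p) hpsum m hmne (strW S p) (fun _ x => z x)]
  refine Finset.sum_le_sum fun j _ => ?_
  have hcoef : 0 ≤ (strW S p j) ^ 2 * ((m j : ℝ))⁻¹ := by positivity
  have hle : dVar (strC S q j) (sisG S p q z j) ≤ dVar (strC S p j) (fun x => z x) := by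
    rw [hVz j]; exact part1 j
  calc (strW S p j) ^ 2 * ((m j : ℝ))⁻¹ * dVar (strC S q j) (sisG S p q z j)
      = (strW S p j) ^ 2 * ((m j : ℝ))⁻¹ * dVar (strC S q j) (sisG S p q z j) := rfl
    _ ≤ (strW S p j) ^ 2 * ((m j : ℝ))⁻¹ * dVar (strC S p j) (fun x => z x) := by
        rw [mul_assoc, mul_assoc]
        exact mul_le_mul_of_nonneg_left (by
          exact mul_le_mul_of_nonneg_left hle (by positivity)) (by positivity)
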